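/- (Convergence of simplified best possible operator) Consider the sequence Q₁ᵏ generated by: Q₁⁰ ≡ r_min/(1−γ); at each step k, select a₂ᵏ(s,a₁) ∈ A₂ for each (s,a₁) and set Q₁ᵏ = max(Q₁ᵏ⁻¹, T_{a₂ᵏ} Q₁ᵏ⁻¹), where (T_{a₂} Q)(s,a₁) = Σ_{s'} P(s'|s,a₁,a₂(s,a₁))[R(s,s') + γ max_{a₁'} Q(s',a₁')]. Assume every selection function a₂ : S × A₁ → A₂ is chosen infinitely often. Then Q₁ᵏ converges pointwise to V₁(s,a₁) = max_{a₂} Q(s,a₁,a₂). -/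
import Mathlib


open Finset Filter Topology

noncomputable def fmax {α : Type*} [Fintype α] [Nonempty α] (f : α → ℝ) : ℝ :=
  Finset.univ.sup' Finset.univ_nonempty f

lemma fmax_le {α : Type*} [Fintype α] [Nonempty α] {f : α → ℝ} {c : ℝ}
    (h : ∀ a, f a ≤ c) : fmax f ≤ c :=
  Finset.sup'_le _ _ fun a _ => h a

lemma le_fmax {α : Type*} [Fintype α] [Nonempty α] (f : α → ℝ) (a : α) :
    f a ≤ fmax f :=
  Finset.le_sup' f (Finset.mem_univ a)

lemma exists_eq_fmax {α : Type*} [Fintype α] [Nonempty α] (f : α → ℝ) :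
    ∃ a, fmax f = f a := by
  obtain ⟨a, _, ha⟩ := Finset.exists_mem_eq_sup' (Finset.univ_nonempty (α := α)) f
  exact ⟨a, ha⟩

theorem stmt7
    {S A1 A2 : Type*} [Fintype S] [Nonempty S] [Fintype A1] [Nonempty A1]
    [Fintype A2] [Nonempty A2]
    (P : S → A1 → A2 → S → ℝ) (R : S → S → ℝ) (γ : ℝ) (rmin rmax : ℝ)
    (hγ0 : 0 ≤ γ) (hγ1 : γ < 1)
    (hPnn : ∀ s a1 a2 s', 0 ≤ P s a1 a2 s')
    (hPsum : ∀ s a1 a2, ∑ s', P s a1 a2 s' = 1)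
    (hR : ∀ s s', R s s' ∈ Set.Icc rmin rmax)
    (Q : S → A1 → A2 → ℝ)
    (hQ : ∀ s a1 a2, Q s a1 a2 =
      ∑ s', P s a1 a2 s' * (R s s' + γ * fmax (fun p : A1 × A2 => Q s' p.1 p.2)))
    (a2sel : ℕ → S → A1 → A2)
    (hfair : ∀ f : S → A1 → A2, ∀ K : ℕ, ∃ k > K, a2sel k = f)
    (Q1 : ℕ → S → A1 → ℝ)
    (hinit : ∀ s a1, Q1 0 s a1 = rmin / (1 - γ))
    (hrec : ∀ k s a1, Q1 (k + 1) s a1 =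
      max (Q1 k s a1)
        (∑ s', P s a1 (a2sel (k + 1) s a1) s' *
          (R s s' + γ * fmax (fun a1' => Q1 k s' a1')))) :
    ∀ s a1, Tendsto (fun k => Q1 k s a1) atTop
      (nhds (fmax (fun a2 => Q s a1 a2))) := by
  have h1γ : 0 < 1 - γ := by linarith
  set V1 : S → A1 → ℝ := fun s a1 => fmax (fun a2 => Q s a1 a2) with hV1def
  -- minimum of Q over triples
  set m : ℝ := Finset.univ.inf' Finset.univ_nonempty
      (fun t : S × A1 × A2 => Q t.1 t.2.1 t.2.2) with hmdef
  have hm_le : ∀ s a1 a2, m ≤ Q s a1 a2 := fun s a1 a2 =>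
    Finset.inf'_le _ (Finset.mem_univ (s, a1, a2))
  have hm_fmaxpair : ∀ s' : S, m ≤ fmax (fun p : A1 × A2 => Q s' p.1 p.2) := by
    intro s'
    obtain ⟨a1⟩ := (inferInstance : Nonempty A1)
    obtain ⟨a2⟩ := (inferInstance : Nonempty A2)
    exact le_trans (hm_le s' a1 a2) (le_fmax (fun p : A1 × A2 => Q s' p.1 p.2) (a1, a2))
  have hm_ge : rmin + γ * m ≤ m := by
    obtain ⟨t, _, ht⟩ := Finset.exists_mem_eq_inf' (Finset.univ_nonempty (α := S × A1 × A2))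
      (fun t : S × A1 × A2 => Q t.1 t.2.1 t.2.2)
    have h1 : rmin + γ * m = ∑ s', P t.1 t.2.1 t.2.2 s' * (rmin + γ * m) := by
      rw [← Finset.sum_mul, hPsum, one_mul]
    have h2 : ∑ s', P t.1 t.2.1 t.2.2 s' * (rmin + γ * m)
        ≤ ∑ s', P t.1 t.2.1 t.2.2 s' * (R t.1 s' + γ * fmax (fun p : A1 × A2 => Q s' p.1 p.2)) := by
      apply Finset.sum_le_sum
      intro s' _
      apply mul_le_mul_of_nonneg_left _ (hPnn _ _ _ _)
      have := (hR t.1 s').1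
      have := mul_le_mul_of_nonneg_left (hm_fmaxpair s') hγ0
      linarith
    have h3 : m = ∑ s', P t.1 t.2.1 t.2.2 s' *
        (R t.1 s' + γ * fmax (fun p : A1 × A2 => Q s' p.1 p.2)) := by
      rw [hmdef, ht]; exact hQ t.1 t.2.1 t.2.2
    linarith
  have hbase : rmin / (1 - γ) ≤ m := by
    rw [div_le_iff₀ h1γ]; nlinarith
  have hQleV : ∀ s a1 a2, Q s a1 a2 ≤ V1 s a1 := fun s a1 a2 => le_fmax _ a2
  have hVlepair : ∀ (s' : S) (a1' : A1),
      V1 s' a1' ≤ fmax (fun p : A1 × A2 => Q s' p.1 p.2) :=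
    fun s' a1' => fmax_le fun a2 => le_fmax (fun p : A1 × A2 => Q s' p.1 p.2) (a1', a2)
  -- Q1 bounded above by V1
  have hub : ∀ k s a1, Q1 k s a1 ≤ V1 s a1 := by
    intro k
    induction k with
    | zero =>
      intro s a1
      rw [hinit]
      obtain ⟨a2⟩ := (inferInstance : Nonempty A2)
      exact le_trans hbase (le_trans (hm_le s a1 a2) (hQleV s a1 a2))
    | succ k ih =>
      intro s a1
      rw [hrec]
      apply max_le (ih s a1)
      calc ∑ s', P s a1 (a2sel (k + 1) s a1) s' *
              (R s s' + γ * fmax (fun a1' => Q1 k s' a1'))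
          ≤ ∑ s', P s a1 (a2sel (k + 1) s a1) s' *
              (R s s' + γ * fmax (fun p : A1 × A2 => Q s' p.1 p.2)) := by
            apply Finset.sum_le_sum
            intro s' _
            apply mul_le_mul_of_nonneg_left _ (hPnn _ _ _ _)
            have hle : fmax (fun a1' => Q1 k s' a1')
                ≤ fmax (fun p : A1 × A2 => Q s' p.1 p.2) :=
              fmax_le fun a1' => le_trans (ih s' a1') (hVlepair s' a1')
            have := mul_le_mul_of_nonneg_left hle hγ0
            linarith
        _ = Q s a1 (a2sel (k + 1) s a1) := (hQ _ _ _).symm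
        _ ≤ V1 s a1 := hQleV _ _ _
  have hmono : ∀ s a1, Monotone fun k => Q1 k s a1 := by
    intro s a1
    apply monotone_nat_of_le_succ
    intro k
    rw [hrec]
    exact le_max_left _ _
  have hbdd : ∀ s a1, BddAbove (Set.range fun k => Q1 k s a1) := by
    intro s a1
    exact ⟨V1 s a1, by rintro x ⟨k, rfl⟩; exact hub k s a1⟩
  set L : S → A1 → ℝ := fun s a1 => ⨆ k, Q1 k s a1 with hLdef
  have htend : ∀ s a1, Tendsto (fun k => Q1 k s a1) atTop (nhds (L s a1)) :=
    fun s a1 => tendsto_atTop_ciSup (hmono s a1) (hbdd s a1)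
  have hQ1leL : ∀ k s a1, Q1 k s a1 ≤ L s a1 := fun k s a1 => le_ciSup (hbdd s a1) k
  have hLleV : ∀ s a1, L s a1 ≤ V1 s a1 := fun s a1 => ciSup_le fun k => hub k s a1
  -- key: L is a supersolution for every fixed a2
  have hkey : ∀ (a2 : A2) (s : S) (a1 : A1),
      ∑ s', P s a1 a2 s' * (R s s' + γ * fmax (fun a1' => L s' a1')) ≤ L s a1 := by
    intro a2 s a1
    apply le_of_forall_pos_le_add
    intro ε hε
    have hex : ∀ (s' : S) (a1' : A1), ∃ k, L s' a1' - ε ≤ Q1 k s' a1' := by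
      intro s' a1'
      have : L s' a1' - ε < ⨆ k, Q1 k s' a1' := by
        have : L s' a1' - ε < L s' a1' := by linarith
        exact this
      obtain ⟨k, hk⟩ := exists_lt_of_lt_ciSup this
      exact ⟨k, hk.le⟩
    choose k0 hk0 using hex
    set K : ℕ := Finset.univ.sup (fun p : S × A1 => k0 p.1 p.2) with hKdef
    have hK : ∀ (s' : S) (a1' : A1) (j : ℕ), K ≤ j → L s' a1' - ε ≤ Q1 j s' a1' := by
      intro s' a1' j hj
      refine le_trans (hk0 s' a1') (hmono s' a1' ?_)
      exact le_trans (Finset.le_sup (f := fun p : S × A1 => k0 p.1 p.2)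
        (Finset.mem_univ (s', a1'))) hj
    obtain ⟨k, hkK, hsel⟩ := hfair (fun _ _ => a2) K
    obtain ⟨j, rfl⟩ : ∃ j, k = j + 1 :=
      ⟨k - 1, (Nat.succ_pred_eq_of_pos (Nat.pos_of_ne_zero (by omega))).symm⟩
    have hjK : K ≤ j := Nat.lt_succ_iff.mp hkK
    have hfmaxL : ∀ s' : S, fmax (fun a1' => L s' a1') ≤ fmax (fun a1' => Q1 j s' a1') + ε := by
      intro s'
      obtain ⟨a1', ha1'⟩ := exists_eq_fmax (fun a1' => L s' a1')
      rw [ha1']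
      have := hK s' a1' j hjK
      have := le_fmax (fun a1' => Q1 j s' a1') a1'
      linarith
    have hsel' : a2sel (j + 1) s a1 = a2 := by rw [hsel]
    calc ∑ s', P s a1 a2 s' * (R s s' + γ * fmax (fun a1' => L s' a1'))
        ≤ ∑ s', (P s a1 a2 s' * (R s s' + γ * fmax (fun a1' => Q1 j s' a1'))
            + P s a1 a2 s' * (γ * ε)) := by
          apply Finset.sum_le_sum
          intro s' _
          rw [← mul_add]
          apply mul_le_mul_of_nonneg_left _ (hPnn _ _ _ _)
          have := mul_le_mul_of_nonneg_left (hfmaxL s') hγ0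
          linarith
      _ = (∑ s', P s a1 a2 s' * (R s s' + γ * fmax (fun a1' => Q1 j s' a1'))) + γ * ε := by
          rw [Finset.sum_add_distrib, ← Finset.sum_mul, hPsum, one_mul]
      _ ≤ Q1 (j + 1) s a1 + γ * ε := by
          have h := hrec j s a1
          rw [hsel'] at h
          have := le_max_right (Q1 j s a1)
            (∑ s', P s a1 a2 s' * (R s s' + γ * fmax (fun a1' => Q1 j s' a1')))
          rw [← h] at this
          linarith
      _ ≤ L s a1 + ε := by
          have := hQ1leL (j + 1) s a1
          nlinarith
  -- contraction: V1 ≤ L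
  have hVleL : ∀ s a1, V1 s a1 ≤ L s a1 := by
    set M : ℝ := fmax (fun p : S × A1 => V1 p.1 p.2 - L p.1 p.2) with hMdef
    have hdiff_le_M : ∀ (s' : S) (a1' : A1), V1 s' a1' - L s' a1' ≤ M :=
      fun s' a1' => le_fmax (fun p : S × A1 => V1 p.1 p.2 - L p.1 p.2) (s', a1')
    have hMle : M ≤ γ * M := by
      obtain ⟨p, hp⟩ := exists_eq_fmax (fun p : S × A1 => V1 p.1 p.2 - L p.1 p.2)
      obtain ⟨a2, ha2⟩ := exists_eq_fmax (fun a2 => Q p.1 p.2 a2)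
      have hkey' := hkey a2 p.1 p.2
      have hdiff : ∀ s' : S,
          fmax (fun q : A1 × A2 => Q s' q.1 q.2) - fmax (fun a1' => L s' a1') ≤ M := by
        intro s'
        obtain ⟨q, hq⟩ := exists_eq_fmax (fun q : A1 × A2 => Q s' q.1 q.2)
        have h1 : Q s' q.1 q.2 ≤ V1 s' q.1 := hQleV _ _ _
        have h2 : L s' q.1 ≤ fmax (fun a1' => L s' a1') := le_fmax _ q.1
        have h3 := hdiff_le_M s' q.1
        rw [hq]; linarith
      have hVeq : V1 p.1 p.2 = Q p.1 p.2 a2 := ha2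
      calc M = V1 p.1 p.2 - L p.1 p.2 := hp
        _ ≤ Q p.1 p.2 a2 -
            ∑ s', P p.1 p.2 a2 s' * (R p.1 s' + γ * fmax (fun a1' => L s' a1')) := by
              rw [hVeq]; linarith
        _ = ∑ s', (P p.1 p.2 a2 s' * (R p.1 s' + γ * fmax (fun q : A1 × A2 => Q s' q.1 q.2))
              - P p.1 p.2 a2 s' * (R p.1 s' + γ * fmax (fun a1' => L s' a1'))) := by
              rw [hQ, ← Finset.sum_sub_distrib]
        _ = ∑ s', P p.1 p.2 a2 s' *
              (γ * (fmax (fun q : A1 × A2 => Q s' q.1 q.2) - fmax (fun a1' => L s' a1'))) := by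
              apply Finset.sum_congr rfl
              intro s' _
              ring
        _ ≤ ∑ s', P p.1 p.2 a2 s' * (γ * M) := by
              apply Finset.sum_le_sum
              intro s' _
              exact mul_le_mul_of_nonneg_left
                (mul_le_mul_of_nonneg_left (hdiff s') hγ0) (hPnn _ _ _ _)
        _ = γ * M := by rw [← Finset.sum_mul, hPsum, one_mul]
    have hM0 : M ≤ 0 := by nlinarith
    intro s a1
    have := hdiff_le_M s a1
    linarith
  intro s a1
  have heq : fmax (fun a2 => Q s a1 a2) = L s a1 :=
    le_antisymm (hVleL s a1) (hLleV s a1)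
  rw [heq]
  exact htend s a1
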